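/- arXiv:2504.05490 — 2 statements merged into one kernel-verified Lean document; each statement's English description precedes it below -/
import Mathlib

section
/- Let Σ_θ be (N+1)×(N+1) positive definite, μ_i ∈ ℝ^(N+1), γ_i > 0 for i ∈ ℕ, and J(t) = trace((Σ_θ⁻¹ + Σ_{i=1}^{t} γ_i⁻¹ μ_i μ_iᵀ)⁻¹). If there exists a unit vector v ∈ ℝ^(N+1) such that Σ_{i=1}^{∞} γ_i⁻¹ (vᵀ μ_i)² < ∞, then lim inf_{t→∞} J(t) > 0. -/
/-!
Write `M t = S⁻¹ + ∑ γᵢ⁻¹ μᵢ μᵢᵀ`, so that `J t = trace (M t)⁻¹`. Everything rests on the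
variational formula `xᵀ A⁻¹ x = max_y (2 xᵀ y - yᵀ A y)` for positive definite `A`. It makes
`A ↦ A⁻¹` antitone in the Loewner order, so `M t ≥ S⁻¹` gives `J t ≤ trace S`; this upper bound
is needed because the `liminf` of a real sequence that is not bounded above is a junk value.
Taking `y` proportional to a unit vector `v` gives `trace A⁻¹ ≥ vᵀ A⁻¹ v ≥ (vᵀ A v)⁻¹`, and
`vᵀ M t v ≤ vᵀ S⁻¹ v + ∑ γᵢ⁻¹ (vᵀ μᵢ)² =: C` by summability, so `J t ≥ C⁻¹ > 0`.
-/

open Matrix Filter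

namespace Matrix

variable {n : Type*} [Fintype n]

lemma sq_dotProduct_le (x y : n → ℝ) : (x ⬝ᵥ y) ^ 2 ≤ (x ⬝ᵥ x) * (y ⬝ᵥ y) := by
  simpa only [dotProduct, sq] using Finset.sum_mul_sq_le_sq_mul_sq Finset.univ x y

lemma dotProduct_vecMulVec_mulVec (x a b y : n → ℝ) :
    x ⬝ᵥ vecMulVec a b *ᵥ y = (x ⬝ᵥ a) * (b ⬝ᵥ y) := by
  rw [dotProduct_mulVec, vecMul_vecMulVec, smul_dotProduct, smul_eq_mul]

lemma dotProduct_sum_smul_vecMulVec_mulVec {ι : Type*} (s : Finset ι) (c : ι → ℝ)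
    (w : ι → n → ℝ) (x : n → ℝ) :
    x ⬝ᵥ (∑ i ∈ s, c i • vecMulVec (w i) (w i)) *ᵥ x = ∑ i ∈ s, c i * (w i ⬝ᵥ x) ^ 2 := by
  simp only [sum_mulVec, dotProduct_sum, smul_mulVec, dotProduct_smul, smul_eq_mul,
    dotProduct_vecMulVec_mulVec, dotProduct_comm x (w _), sq]

lemma posSemidef_sum_smul_vecMulVec {ι : Type*} (s : Finset ι) {c : ι → ℝ}
    (hc : ∀ i ∈ s, 0 ≤ c i) (w : ι → n → ℝ) :
    (∑ i ∈ s, c i • vecMulVec (w i) (w i)).PosSemidef :=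
  posSemidef_sum s fun i hi => by
    simpa using (posSemidef_vecMulVec_self_star (w i)).smul (hc i hi)

lemma PosSemidef.dotProduct_mulVec_le_trace_mul {A : Matrix n n ℝ} (hA : A.PosSemidef)
    (x : n → ℝ) : x ⬝ᵥ A *ᵥ x ≤ A.trace * (x ⬝ᵥ x) := by
  obtain ⟨m, w, rfl⟩ := posSemidef_iff_eq_sum_vecMulVec.mp hA
  simp only [star_trivial, trace_sum, trace_vecMulVec, sum_mulVec, dotProduct_sum,
    Finset.sum_mul, dotProduct_vecMulVec_mulVec]
  refine Finset.sum_le_sum fun i _ => ?_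
  rw [mul_comm (w i ⬝ᵥ w i), dotProduct_comm (w i) x, ← sq]
  exact sq_dotProduct_le x (w i)

variable [DecidableEq n]

lemma PosDef.mulVec_inv_mulVec {A : Matrix n n ℝ} (hA : A.PosDef) (x : n → ℝ) :
    A *ᵥ (A⁻¹ *ᵥ x) = x := by
  rw [mulVec_mulVec, mul_nonsing_inv _ ((isUnit_iff_isUnit_det A).mp hA.isUnit), one_mulVec]

/-- Equality holds at `y = A⁻¹ x`: expand `0 ≤ (y - A⁻¹ x)ᵀ A (y - A⁻¹ x)`. -/
lemma PosDef.two_mul_dotProduct_sub_le {A : Matrix n n ℝ} (hA : A.PosDef) (x y : n → ℝ) :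
    2 * (x ⬝ᵥ y) - y ⬝ᵥ A *ᵥ y ≤ x ⬝ᵥ A⁻¹ *ᵥ x := by
  have hsymm : (A⁻¹ *ᵥ x) ⬝ᵥ A *ᵥ y = x ⬝ᵥ y := by
    rw [dotProduct_mulVec, ← mulVec_transpose, ← conjTranspose_eq_transpose_of_trivial,
      hA.isHermitian.eq, hA.mulVec_inv_mulVec, dotProduct_comm]
  have := hA.posSemidef.dotProduct_mulVec_nonneg (y - A⁻¹ *ᵥ x)
  simp only [star_trivial, mulVec_sub, hA.mulVec_inv_mulVec, sub_dotProduct, dotProduct_sub,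
    hsymm] at this
  rw [dotProduct_comm (A⁻¹ *ᵥ x) x, dotProduct_comm y x] at this
  linarith

lemma PosDef.posSemidef_inv_sub_inv {A B : Matrix n n ℝ} (hA : A.PosDef) (hB : B.PosDef)
    (hAB : (A - B).PosSemidef) : (B⁻¹ - A⁻¹).PosSemidef := by
  refine .of_dotProduct_mulVec_nonneg (hB.inv.isHermitian.sub hA.inv.isHermitian) fun x => ?_
  simp only [star_trivial, sub_mulVec, dotProduct_sub, sub_nonneg]
  have hBA := hAB.dotProduct_mulVec_nonneg (A⁻¹ *ᵥ x)
  simp only [star_trivial, sub_mulVec, dotProduct_sub, sub_nonneg, hA.mulVec_inv_mulVec] at hBA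
  rw [dotProduct_comm (A⁻¹ *ᵥ x) x] at hBA
  linarith [hB.two_mul_dotProduct_sub_le x (A⁻¹ *ᵥ x)]

lemma PosDef.trace_inv_le_trace_inv {A B : Matrix n n ℝ} (hA : A.PosDef) (hB : B.PosDef)
    (hAB : (A - B).PosSemidef) : A⁻¹.trace ≤ B⁻¹.trace := by
  simpa [trace_sub] using (hA.posSemidef_inv_sub_inv hB hAB).trace_nonneg

lemma PosDef.sq_dotProduct_self_div_le {A : Matrix n n ℝ} (hA : A.PosDef) (x : n → ℝ) :
    (x ⬝ᵥ x) ^ 2 / (x ⬝ᵥ A *ᵥ x) ≤ x ⬝ᵥ A⁻¹ *ᵥ x := by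
  set q := x ⬝ᵥ A *ᵥ x
  have := hA.two_mul_dotProduct_sub_le x ((x ⬝ᵥ x / q) • x)
  simp only [dotProduct_smul, mulVec_smul, smul_dotProduct, smul_eq_mul] at this
  rcases eq_or_ne q 0 with hq | hq
  · simpa [hq] using this
  · convert this using 1
    field_simp
    ring

lemma PosDef.inv_dotProduct_mulVec_le_trace_inv {A : Matrix n n ℝ} (hA : A.PosDef)
    {v : n → ℝ} (hv : v ⬝ᵥ v = 1) : (v ⬝ᵥ A *ᵥ v)⁻¹ ≤ A⁻¹.trace := calc
  (v ⬝ᵥ A *ᵥ v)⁻¹ = (v ⬝ᵥ v) ^ 2 / (v ⬝ᵥ A *ᵥ v) := by rw [hv, one_pow, one_div]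
  _ ≤ v ⬝ᵥ A⁻¹ *ᵥ v := hA.sq_dotProduct_self_div_le v
  _ ≤ A⁻¹.trace := by simpa [hv] using hA.inv.posSemidef.dotProduct_mulVec_le_trace_mul v

end Matrix

theorem stmt_6 (N : ℕ)
    (S : Matrix (Fin (N + 1)) (Fin (N + 1)) ℝ) (hS : S.PosDef)
    (μ : ℕ → Fin (N + 1) → ℝ) (γ : ℕ → ℝ) (hγ : ∀ i, 0 < γ i)
    (J : ℕ → ℝ)
    (hJ : ∀ t, J t =
      ((S⁻¹ + ∑ i ∈ Finset.Icc 1 t,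
        (γ i)⁻¹ • Matrix.vecMulVec (μ i) (μ i))⁻¹).trace)
    (v : Fin (N + 1) → ℝ) (hv : ∑ j, (v j) ^ 2 = 1)
    (hsum : Summable (fun i => (γ i)⁻¹ * (v ⬝ᵥ μ i) ^ 2)) :
    0 < Filter.liminf J Filter.atTop := by
  set P : ℕ → Matrix (Fin (N + 1)) (Fin (N + 1)) ℝ :=
    fun t => ∑ i ∈ Finset.Icc 1 t, (γ i)⁻¹ • vecMulVec (μ i) (μ i)
  have hγinv : ∀ i, 0 ≤ (γ i)⁻¹ := fun i => (inv_pos.2 (hγ i)).le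
  have hP : ∀ t, (P t).PosSemidef := fun t =>
    posSemidef_sum_smul_vecMulVec _ (fun i _ => hγinv i) μ
  have hM : ∀ t, (S⁻¹ + P t).PosDef := fun t => hS.inv.add_posSemidef (hP t)
  have hvv : v ⬝ᵥ v = 1 := by simpa only [dotProduct, sq] using hv
  have hv0 : v ≠ 0 := by rintro rfl; simp at hvv
  set C := v ⬝ᵥ S⁻¹ *ᵥ v + ∑' i, (γ i)⁻¹ * (v ⬝ᵥ μ i) ^ 2
  have hquad : ∀ t, v ⬝ᵥ (S⁻¹ + P t) *ᵥ v ≤ C := fun t => by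
    rw [add_mulVec, dotProduct_add, dotProduct_sum_smul_vecMulVec_mulVec]
    refine (add_le_add_iff_left _).2 ?_
    simp only [dotProduct_comm (μ _) v]
    exact hsum.sum_le_tsum _ fun i _ => mul_nonneg (hγinv i) (sq_nonneg _)
  have hpos : ∀ t, 0 < v ⬝ᵥ (S⁻¹ + P t) *ᵥ v := fun t => by
    simpa using (hM t).dotProduct_mulVec_pos hv0
  have hlower : ∀ t, C⁻¹ ≤ J t := fun t =>
    (inv_anti₀ (hpos t) (hquad t)).trans <|
      ((hM t).inv_dotProduct_mulVec_le_trace_inv hvv).trans_eq (hJ t).symm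
  have hupper : ∀ t, J t ≤ S.trace := fun t => calc
    J t ≤ S⁻¹⁻¹.trace := (hJ t).trans_le <|
      (hM t).trace_inv_le_trace_inv hS.inv (by simpa using hP t)
    _ = S.trace := by rw [nonsing_inv_nonsing_inv S ((isUnit_iff_isUnit_det S).mp hS.isUnit)]
  have hC : 0 < C := (hpos 0).trans_le (hquad 0)
  exact (inv_pos.2 hC).trans_le <| le_liminf_of_le
    (isBoundedUnder_of ⟨S.trace, hupper⟩).isCoboundedUnder_ge (.of_forall hlower)
end

section
/- Let J(t) = trace((Σ_θ⁻¹ + S₀ + Σ_{i=1}^{t} γ_i⁻¹ s_i s_iᵀ)⁻¹) with Σ_θ positive definite, S₀ positive semidefinite, γ_i > 0, and s_i ∈ ℝⁿ. Then lim_{t→∞} J(t) = 0 if and only if for every unit vector v ∈ ℝⁿ, the series Σ_{i=1}^{∞} γ_i⁻¹ (vᵀ s_i)² diverges to infinity. -/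
/-!
Write `A t` for the matrix being inverted. Its quadratic form is `vᵀ A t v = vᵀ (Σ_θ⁻¹ + S₀) v`
plus the partial sum in the statement, so the condition says that `vᵀ A t v → ∞` for every unit
vector `v`. If `tr (A t)⁻¹ → 0` this follows from Cauchy–Schwarz for the form of `A t`:
`1 = (vᵀ v)² ≤ (vᵀ (A t)⁻¹ v) (vᵀ A t v) ≤ tr (A t)⁻¹ · vᵀ A t v`. Conversely, the forms increase
with `t`, so by compactness of the unit sphere they eventually exceed any `c > 0` uniformly on it;
then `eⱼᵀ (A t)⁻¹ eⱼ ≤ 1 / c` for every basis vector, and `tr (A t)⁻¹ ≤ n / c`.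
-/

open Matrix Filter

theorem IsCompact.eventually_forall_lt_of_monotone {X τ α : Type*} [TopologicalSpace X]
    [Preorder τ] [IsDirectedOrder τ] [Nonempty τ]
    [LinearOrder α] [NoMaxOrder α] [TopologicalSpace α] [OrderClosedTopology α]
    {K : Set X} (hK : IsCompact K) {f : τ → X → α} (hf : ∀ t, Continuous (f t))
    (hmono : ∀ x, Monotone (f · x)) (h : ∀ x ∈ K, Tendsto (f · x) atTop atTop) (c : α) :
    ∀ᶠ t in atTop, ∀ x ∈ K, c < f t x := by
  obtain ⟨T, hT⟩ := hK.elim_directed_cover (fun t => {x | c < f t x})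
    (fun t => isOpen_lt continuous_const (hf t))
    (fun x hx => Set.mem_iUnion.2 ((h x hx).eventually_gt_atTop c).exists)
    (Monotone.directed_le fun s t hst x hx => lt_of_lt_of_le hx (hmono x hst))
  exact eventually_atTop.2 ⟨T, fun t hTt x hx => (hT hx).trans_le (hmono x hTt)⟩

namespace Matrix

variable {ι : Type*} [Fintype ι]

theorem isCompact_setOf_dotProduct_self_eq_one : IsCompact {v : ι → ℝ | v ⬝ᵥ v = 1} := by
  refine Metric.isCompact_of_isClosed_isBounded
    (isClosed_eq (continuous_id.dotProduct continuous_id) continuous_const)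
    (Metric.isBounded_closedBall (x := 0) (r := 1) |>.subset fun v hv => ?_)
  rw [mem_closedBall_zero_iff, pi_norm_le_iff_of_nonneg zero_le_one]
  intro i
  rw [Real.norm_eq_abs, ← sq_le_one_iff_abs_le_one, ← hv.out, sq]
  exact Finset.single_le_sum (fun j _ => mul_self_nonneg (v j)) (Finset.mem_univ i)

theorem dotProduct_sq_le (v w : ι → ℝ) : (v ⬝ᵥ w) ^ 2 ≤ (v ⬝ᵥ v) * (w ⬝ᵥ w) := by
  simpa only [dotProduct, sq] using Finset.sum_mul_sq_le_sq_mul_sq Finset.univ v w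

theorem dotProduct_vecMulVec_self_mulVec (v w : ι → ℝ) :
    v ⬝ᵥ vecMulVec w w *ᵥ v = (v ⬝ᵥ w) ^ 2 := by
  rw [vecMulVec_mulVec, op_smul_eq_smul, dotProduct_smul, smul_eq_mul, dotProduct_comm w v, sq]

theorem mul_dotProduct_self_le_of_forall_dotProduct_self_eq_one {A : Matrix ι ι ℝ} {c : ℝ}
    (h : ∀ u : ι → ℝ, u ⬝ᵥ u = 1 → c ≤ u ⬝ᵥ A *ᵥ u) (v : ι → ℝ) :
    c * (v ⬝ᵥ v) ≤ v ⬝ᵥ A *ᵥ v := by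
  rcases (show 0 ≤ v ⬝ᵥ v by simpa using dotProduct_star_self_nonneg v).eq_or_lt with h0 | hvv
  · simp [dotProduct_self_eq_zero.1 h0.symm]
  set r := √(v ⬝ᵥ v)
  have hr : r ^ 2 = v ⬝ᵥ v := Real.sq_sqrt hvv.le
  have hr0 : r ≠ 0 := (Real.sqrt_pos.2 hvv).ne'
  have hu := h (r⁻¹ • v) (by
    rw [smul_dotProduct, dotProduct_smul, smul_eq_mul, smul_eq_mul, ← hr]; field_simp)
  rw [mulVec_smul, smul_dotProduct, dotProduct_smul, smul_eq_mul, smul_eq_mul, ← mul_assoc,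
    ← sq, inv_pow, hr, inv_mul_eq_div, le_div_iff₀ hvv] at hu
  linarith

namespace PosSemidef

theorem dotProduct_mulVec_sq_le {A : Matrix ι ι ℝ} (hA : A.PosSemidef) (x y : ι → ℝ) :
    (x ⬝ᵥ A *ᵥ y) ^ 2 ≤ (x ⬝ᵥ A *ᵥ x) * (y ⬝ᵥ A *ᵥ y) := by
  have hsymm : y ⬝ᵥ A *ᵥ x = x ⬝ᵥ A *ᵥ y := by
    rw [dotProduct_mulVec, ← mulVec_transpose, dotProduct_comm,
      ← conjTranspose_eq_transpose_of_trivial, hA.isHermitian.eq]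
  have hdiscr := discrim_le_zero (a := y ⬝ᵥ A *ᵥ y) (b := 2 * (x ⬝ᵥ A *ᵥ y))
    (c := x ⬝ᵥ A *ᵥ x) fun l => by
      have := hA.dotProduct_mulVec_nonneg (x + l • y)
      simp only [star_trivial, mulVec_add, mulVec_smul, dotProduct_add, add_dotProduct,
        dotProduct_smul, smul_dotProduct, smul_eq_mul, hsymm] at this
      linarith
  rw [discrim] at hdiscr
  linarith

theorem dotProduct_mulVec_le_mul_trace {A : Matrix ι ι ℝ} (hA : A.PosSemidef) (v : ι → ℝ) :
    v ⬝ᵥ A *ᵥ v ≤ (v ⬝ᵥ v) * A.trace := by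
  obtain ⟨m, w, rfl⟩ := posSemidef_iff_eq_sum_vecMulVec.1 hA
  simp only [star_trivial, sum_mulVec, dotProduct_sum, dotProduct_vecMulVec_self_mulVec,
    trace_sum, trace_vecMulVec, Finset.mul_sum]
  exact Finset.sum_le_sum fun k _ => dotProduct_sq_le v (w k)

end PosSemidef

namespace PosDef

variable [DecidableEq ι] {A : Matrix ι ι ℝ}

theorem mulVec_inv_mulVec_s17 (hA : A.PosDef) (v : ι → ℝ) : A *ᵥ (A⁻¹ *ᵥ v) = v := by
  rw [mulVec_mulVec, mul_nonsing_inv _ ((isUnit_iff_isUnit_det A).1 hA.isUnit), one_mulVec]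

theorem dotProduct_self_sq_le (hA : A.PosDef) (v : ι → ℝ) :
    (v ⬝ᵥ v) ^ 2 ≤ (v ⬝ᵥ A⁻¹ *ᵥ v) * (v ⬝ᵥ A *ᵥ v) := by
  have := hA.posSemidef.dotProduct_mulVec_sq_le v (A⁻¹ *ᵥ v)
  rwa [hA.mulVec_inv_mulVec_s17, dotProduct_comm (A⁻¹ *ᵥ v), mul_comm] at this

theorem dotProduct_inv_mulVec_le (hA : A.PosDef) {c : ℝ} (hc : 0 < c)
    (h : ∀ u, c * (u ⬝ᵥ u) ≤ u ⬝ᵥ A *ᵥ u) (v : ι → ℝ) :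
    v ⬝ᵥ A⁻¹ *ᵥ v ≤ (v ⬝ᵥ v) / c := by
  set w := A⁻¹ *ᵥ v
  have hw : c * (w ⬝ᵥ w) ≤ v ⬝ᵥ w := by
    simpa only [show A *ᵥ w = v from hA.mulVec_inv_mulVec_s17 v, dotProduct_comm w v] using h w
  have hcs := dotProduct_sq_le v w
  have hvv : 0 ≤ v ⬝ᵥ v := by simpa using dotProduct_star_self_nonneg v
  rw [le_div_iff₀ hc]
  rcases (show 0 ≤ v ⬝ᵥ w by simpa using hA.inv.posSemidef.dotProduct_mulVec_nonneg v).eq_or_lt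
    with h0 | hpos
  · rwa [← h0, zero_mul]
  refine le_of_mul_le_mul_right ?_ hpos
  calc v ⬝ᵥ w * c * v ⬝ᵥ w = c * (v ⬝ᵥ w) ^ 2 := by ring
    _ ≤ c * ((v ⬝ᵥ v) * (w ⬝ᵥ w)) := mul_le_mul_of_nonneg_left hcs hc.le
    _ = (v ⬝ᵥ v) * (c * (w ⬝ᵥ w)) := by ring
    _ ≤ (v ⬝ᵥ v) * (v ⬝ᵥ w) := mul_le_mul_of_nonneg_left hw hvv

theorem one_le_trace_inv_mul (hA : A.PosDef) {v : ι → ℝ} (hv : v ⬝ᵥ v = 1) :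
    1 ≤ A⁻¹.trace * (v ⬝ᵥ A *ᵥ v) := by
  have hcs := hA.dotProduct_self_sq_le v
  have htr := hA.inv.posSemidef.dotProduct_mulVec_le_mul_trace v
  have hq : 0 ≤ v ⬝ᵥ A *ᵥ v := by simpa using hA.posSemidef.dotProduct_mulVec_nonneg v
  rw [hv] at hcs htr
  nlinarith

theorem trace_inv_le (hA : A.PosDef) {c : ℝ} (hc : 0 < c)
    (h : ∀ u, c * (u ⬝ᵥ u) ≤ u ⬝ᵥ A *ᵥ u) : A⁻¹.trace ≤ Fintype.card ι / c := by
  calc A⁻¹.trace = ∑ j, Pi.single j 1 ⬝ᵥ A⁻¹ *ᵥ Pi.single j 1 := by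
        simp [trace]
    _ ≤ ∑ _j : ι, 1 / c := Finset.sum_le_sum fun j _ => by
        simpa using hA.dotProduct_inv_mulVec_le hc h (Pi.single j 1)
    _ = Fintype.card ι / c := by simp [div_eq_mul_inv]

end PosDef

variable [DecidableEq ι]

theorem tendsto_dotProduct_mulVec_of_tendsto_trace_inv {τ : Type*} {l : Filter τ}
    {A : τ → Matrix ι ι ℝ} (hA : ∀ t, (A t).PosDef)
    (h : Tendsto (fun t => (A t)⁻¹.trace) l (nhds 0)) {v : ι → ℝ} (hv : v ⬝ᵥ v = 1) :
    Tendsto (fun t => v ⬝ᵥ A t *ᵥ v) l atTop := by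
  have hpos : ∀ t, 0 < (A t)⁻¹.trace := fun t =>
    (hA t).inv.posSemidef.trace_nonneg.lt_of_ne fun h0 => by
      linarith [h0 ▸ (hA t).one_le_trace_inv_mul hv]
  refine tendsto_atTop_mono (fun t => (inv_le_iff_one_le_mul₀' (hpos t)).2
    ((hA t).one_le_trace_inv_mul hv)) ?_
  exact Tendsto.inv_tendsto_nhdsGT_zero (tendsto_nhdsWithin_iff.2 ⟨h, .of_forall hpos⟩)

theorem tendsto_trace_inv_of_tendsto_dotProduct_mulVec {τ : Type*} [Preorder τ]
    [IsDirectedOrder τ] [Nonempty τ] {A : τ → Matrix ι ι ℝ} (hA : ∀ t, (A t).PosDef)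
    (hmono : ∀ v, Monotone fun t => v ⬝ᵥ A t *ᵥ v)
    (h : ∀ v : ι → ℝ, v ⬝ᵥ v = 1 → Tendsto (fun t => v ⬝ᵥ A t *ᵥ v) atTop atTop) :
    Tendsto (fun t => (A t)⁻¹.trace) atTop (nhds 0) := by
  have hbound : ∀ c > 0, ∀ᶠ t in atTop, (A t)⁻¹.trace ≤ Fintype.card ι / c := fun c hc =>
    (isCompact_setOf_dotProduct_self_eq_one.eventually_forall_lt_of_monotone
      (fun t => continuous_id.dotProduct (continuous_const.matrix_mulVec continuous_id))
      hmono h c).mono fun t ht => (hA t).trace_inv_le hc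
        (mul_dotProduct_self_le_of_forall_dotProduct_self_eq_one fun u hu => (ht u hu).le)
  refine tendsto_order.2 ⟨fun a ha => .of_forall fun t =>
    ha.trans_le (hA t).inv.posSemidef.trace_nonneg, fun ε hε => ?_⟩
  have hc : 0 < (Fintype.card ι + 1) / ε := by positivity
  refine (hbound _ hc).mono fun t ht => ht.trans_lt ?_
  rw [div_div_eq_mul_div, div_lt_iff₀ (by positivity)]
  nlinarith

theorem tendsto_trace_inv_nhds_zero_iff {A : ℕ → Matrix ι ι ℝ} (hA : ∀ t, (A t).PosDef)
    (hmono : ∀ v, Monotone fun t => v ⬝ᵥ A t *ᵥ v) :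
    Tendsto (fun t => (A t)⁻¹.trace) atTop (nhds 0) ↔
      ∀ v : ι → ℝ, v ⬝ᵥ v = 1 → Tendsto (fun t => v ⬝ᵥ A t *ᵥ v) atTop atTop :=
  ⟨fun h _ hv => tendsto_dotProduct_mulVec_of_tendsto_trace_inv hA h hv,
    tendsto_trace_inv_of_tendsto_dotProduct_mulVec hA hmono⟩

end Matrix

theorem stmt_17 (n : ℕ)
    (S : Matrix (Fin n) (Fin n) ℝ) (hS : S.PosDef)
    (S₀ : Matrix (Fin n) (Fin n) ℝ) (hS₀ : S₀.PosSemidef)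
    (γ : ℕ → ℝ) (hγ : ∀ i, 0 < γ i)
    (s : ℕ → Fin n → ℝ)
    (J : ℕ → ℝ)
    (hJ : ∀ t, J t =
      ((S⁻¹ + S₀ + ∑ i ∈ Finset.Icc 1 t,
        (γ i)⁻¹ • Matrix.vecMulVec (s i) (s i))⁻¹).trace) :
    Tendsto J atTop (nhds 0) ↔
      ∀ v : Fin n → ℝ, ∑ j, (v j) ^ 2 = 1 →
        Tendsto (fun t => ∑ i ∈ Finset.Icc 1 t, (γ i)⁻¹ * (v ⬝ᵥ s i) ^ 2)
          atTop atTop := by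
  set A : ℕ → Matrix (Fin n) (Fin n) ℝ := fun t =>
    S⁻¹ + S₀ + ∑ i ∈ Finset.Icc 1 t, (γ i)⁻¹ • vecMulVec (s i) (s i)
  have hA : ∀ t, (A t).PosDef := fun t => (hS.inv.add_posSemidef hS₀).add_posSemidef <|
    posSemidef_sum _ fun i _ => by
      simpa using (posSemidef_vecMulVec_self_star (s i)).smul (inv_nonneg.2 (hγ i).le)
  have hquad : ∀ v t, v ⬝ᵥ A t *ᵥ v =
      v ⬝ᵥ (S⁻¹ + S₀) *ᵥ v + ∑ i ∈ Finset.Icc 1 t, (γ i)⁻¹ * (v ⬝ᵥ s i) ^ 2 := fun v t => by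
    simp only [A, add_mulVec, dotProduct_add, sum_mulVec, dotProduct_sum, smul_mulVec,
      dotProduct_smul, smul_eq_mul, dotProduct_vecMulVec_self_mulVec]
  have hmono : ∀ v, Monotone fun t => v ⬝ᵥ A t *ᵥ v := fun v a b hab => by
    simp only [hquad]
    gcongr
    exact fun i _ _ => mul_nonneg (inv_nonneg.2 (hγ i).le) (sq_nonneg _)
  rw [show J = fun t => (A t)⁻¹.trace from funext hJ, tendsto_trace_inv_nhds_zero_iff hA hmono]
  refine forall_congr' fun v => imp_congr (by simp only [dotProduct, sq]) ?_
  simp only [hquad]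
  exact ⟨fun h => by simpa using tendsto_atTop_add_const_left _ (-(v ⬝ᵥ (S⁻¹ + S₀) *ᵥ v)) h,
    tendsto_atTop_add_const_left _ _⟩
end
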